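/- Let ε > 0, n ≥ 3, L as above, and suppose h ∈ C([0,1]) ∩ C^2((0,1)) satisfies L h = 0 on (0,1), h(0) = 0, h(1) = 1, and r ≤ h(r) ≤ r^α on (0,1) with α ∈ (0,1) the positive root of α^2+(n-1)α-(n-2)=0. Then the integral ∫_r^1 ds / ( h(s)^2 s^{n-2} (ε + s^2) ) multiplied by h(r) tends to +∞ as r → 0+. -/

import Mathlib

noncomputable def L (n : ℕ) (ε : ℝ) (V : ℝ → ℝ) (r : ℝ) : ℝ :=
  deriv (deriv V) r + (((n : ℝ) - 2) / r + 2 * r / (ε + r ^ 2)) * deriv V r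
    - ((n : ℝ) - 2) / r ^ 2 * V r

open Set Filter MeasureTheory intervalIntegral Real

noncomputable def Gf (n : ℕ) (ε : ℝ) (s : ℝ) : ℝ := s ^ ((n : ℝ) - 2) * (ε + s ^ 2)

noncomputable def ff (n : ℕ) (ε : ℝ) (h : ℝ → ℝ) (s : ℝ) : ℝ :=
  1 / (h s ^ 2 * s ^ ((n : ℝ) - 2) * (ε + s ^ 2))

noncomputable def If (n : ℕ) (ε : ℝ) (h : ℝ → ℝ) (r : ℝ) : ℝ := ∫ s in r..1, ff n ε h s

set_option maxHeartbeats 2000000 in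
theorem integral_divergence (n : ℕ) (hn : 3 ≤ n) (ε : ℝ) (hε : 0 < ε) (α : ℝ)
    (hα0 : 0 < α) (hα1 : α < 1)
    (hroot : α ^ 2 + ((n : ℝ) - 1) * α - ((n : ℝ) - 2) = 0)
    (h : ℝ → ℝ) (hcont : ContinuousOn h (Set.Icc 0 1))
    (hC2 : ContDiffOn ℝ 2 h (Set.Ioo 0 1))
    (hL : ∀ r ∈ Set.Ioo (0 : ℝ) 1, L n ε h r = 0)
    (h0 : h 0 = 0) (h1 : h 1 = 1)
    (hlow : ∀ r ∈ Set.Ioo (0 : ℝ) 1, r ≤ h r)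
    (hupp : ∀ r ∈ Set.Ioo (0 : ℝ) 1, h r ≤ r ^ α) :
    Filter.Tendsto
      (fun r => h r * ∫ s in r..1, 1 / (h s ^ 2 * s ^ ((n : ℝ) - 2) * (ε + s ^ 2)))
      (nhdsWithin 0 (Set.Ioi 0)) Filter.atTop := by
  have hc : (1 : ℝ) ≤ (n : ℝ) - 2 := by
    have : (3 : ℝ) ≤ (n : ℝ) := by exact_mod_cast hn
    linarith
  have hcpos : (0 : ℝ) < (n : ℝ) - 2 := by linarith
  have hGpos : ∀ s : ℝ, 0 < s → 0 < Gf n ε s := by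
    intro s hs
    exact mul_pos (rpow_pos_of_pos hs _) (by positivity)
  have hpos : ∀ r ∈ Set.Ioo (0 : ℝ) 1, 0 < h r := fun r hr => lt_of_lt_of_le hr.1 (hlow r hr)
  have hposIoc : ∀ s ∈ Set.Ioc (0 : ℝ) 1, 0 < h s := by
    intro s hs
    rcases eq_or_lt_of_le hs.2 with he | hl
    · rw [he, h1]; norm_num
    · exact hpos s ⟨hs.1, hl⟩
  have hle1 : ∀ r ∈ Set.Ioc (0 : ℝ) 1, h r ≤ 1 := by
    intro r hr
    rcases eq_or_lt_of_le hr.2 with he | hl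
    · rw [he, h1]
    · exact le_trans (hupp r ⟨hr.1, hl⟩) (rpow_le_one hr.1.le hl.le hα0.le)
  -- differentiability
  have hdiff : DifferentiableOn ℝ h (Set.Ioo 0 1) := hC2.differentiableOn (by norm_num)
  have hd1 : ∀ r ∈ Set.Ioo (0 : ℝ) 1, HasDerivAt h (deriv h r) r := fun r hr =>
    (hdiff.differentiableAt (isOpen_Ioo.mem_nhds hr)).hasDerivAt
  have hC1' : ContDiffOn ℝ 1 (deriv h) (Set.Ioo 0 1) :=
    hC2.deriv_of_isOpen isOpen_Ioo (by norm_num)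
  have hd2 : ∀ r ∈ Set.Ioo (0 : ℝ) 1, HasDerivAt (deriv h) (deriv (deriv h) r) r := fun r hr =>
    ((hC1'.differentiableOn (by norm_num)).differentiableAt (isOpen_Ioo.mem_nhds hr)).hasDerivAt
  have hd1cont : ContinuousOn (deriv h) (Set.Ioo 0 1) := hC1'.continuousOn
  -- the ODE
  have hode : ∀ r ∈ Set.Ioo (0 : ℝ) 1, deriv (deriv h) r =
      -((((n : ℝ) - 2) / r + 2 * r / (ε + r ^ 2)) * deriv h r) + ((n : ℝ) - 2) / r ^ 2 * h r := by
    intro r hr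
    have := hL r hr
    simp only [L] at this
    linarith
  -- derivative of G
  have hGd : ∀ r ∈ Set.Ioo (0 : ℝ) 1, HasDerivAt (Gf n ε)
      (((n : ℝ) - 2) * r ^ ((n : ℝ) - 2 - 1) * (ε + r ^ 2) + r ^ ((n : ℝ) - 2) * (2 * r)) r := by
    intro r hr
    have h1' : HasDerivAt (fun x : ℝ => x ^ ((n : ℝ) - 2)) (((n : ℝ) - 2) * r ^ ((n : ℝ) - 2 - 1)) r :=
      Real.hasDerivAt_rpow_const (Or.inl hr.1.ne')
    have h2' : HasDerivAt (fun x : ℝ => ε + x ^ 2) (2 * r) r := by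
      simpa using (hasDerivAt_pow 2 r).const_add ε
    exact h1'.mul h2'
  -- derivative of K = G * h'
  have hKd : ∀ r ∈ Set.Ioo (0 : ℝ) 1, HasDerivAt (fun x => Gf n ε x * deriv h x)
      (((n : ℝ) - 2) * Gf n ε r * h r / r ^ 2) r := by
    intro r hr
    have hr0 : r ≠ 0 := hr.1.ne'
    have hεr : ε + r ^ 2 ≠ 0 := by positivity
    have hsub : r ^ ((n : ℝ) - 2 - 1) = r ^ ((n : ℝ) - 2) / r := by
      rw [Real.rpow_sub hr.1, Real.rpow_one]
    have : HasDerivAt (fun x => Gf n ε x * deriv h x) _ r := (hGd r hr).mul (hd2 r hr)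
    convert this using 1
    rw [hode r hr, hsub]
    simp only [Gf]
    field_simp
    ring
  have hKmono : StrictMonoOn (fun x => Gf n ε x * deriv h x) (Set.Ioo 0 1) := by
    apply strictMonoOn_of_deriv_pos (convex_Ioo 0 1)
    · exact fun x hx => (((hGd x hx).continuousAt).mul (hd2 x hx).continuousAt).continuousWithinAt
    · intro x hx
      rw [interior_Ioo] at hx
      rw [(hKd x hx).deriv]
      exact div_pos (mul_pos (mul_pos hcpos (hGpos x hx.1)) (hpos x hx)) (pow_pos hx.1 2)
  -- h' > 0 on (0,1)
  have hderivpos : ∀ r ∈ Set.Ioo (0 : ℝ) 1, 0 < deriv h r := by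
    by_contra hcon
    push_neg at hcon
    obtain ⟨t0, ht0, ht0le⟩ := hcon
    have hKneg : ∀ s ∈ Set.Ioo (0 : ℝ) t0, deriv h s < 0 := by
      intro s hs
      have hs1 : s ∈ Set.Ioo (0 : ℝ) 1 := ⟨hs.1, hs.2.trans ht0.2⟩
      have hlt : Gf n ε s * deriv h s < Gf n ε t0 * deriv h t0 := hKmono hs1 ht0 hs.2
      have hK0 : Gf n ε t0 * deriv h t0 ≤ 0 :=
        mul_nonpos_iff.mpr (Or.inl ⟨(hGpos t0 ht0.1).le, ht0le⟩)
      nlinarith [hGpos s hs.1]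
    have hanti : StrictAntiOn h (Set.Ioo 0 t0) := by
      apply strictAntiOn_of_deriv_neg (convex_Ioo 0 t0)
      · exact fun x hx => (hd1 x ⟨hx.1, hx.2.trans ht0.2⟩).continuousAt.continuousWithinAt
      · intro x hx
        rw [interior_Ioo] at hx
        exact hKneg x hx
    set t2 := t0 / 2 with ht2def
    have ht2 : t2 ∈ Set.Ioo (0 : ℝ) t0 := ⟨by linarith [ht0.1], by linarith [ht0.1]⟩
    have ht2' : t2 ∈ Set.Ioo (0 : ℝ) 1 := ⟨ht2.1, ht2.2.trans ht0.2⟩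
    have hht2 : t2 ≤ h t2 := hlow t2 ht2'
    have T : Tendsto h (nhdsWithin 0 (Set.Ioo (0 : ℝ) t2)) (nhds 0) := by
      have hT0 : ContinuousWithinAt h (Set.Icc 0 1) 0 := hcont 0 ⟨le_refl 0, zero_le_one⟩
      have := hT0.mono (show Set.Ioo (0 : ℝ) t2 ⊆ Set.Icc 0 1 by
        intro x hx; exact ⟨hx.1.le, hx.2.le.trans (le_of_lt (ht2'.2))⟩)
      simpa [ContinuousWithinAt, h0] using this
    rw [nhdsWithin_Ioo_eq_nhdsGT ht2.1] at T
    have hev1 : ∀ᶠ s in nhdsWithin (0 : ℝ) (Set.Ioi 0), h s < t2 :=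
      T (Iio_mem_nhds ht2.1)
    have hev2 : ∀ᶠ s in nhdsWithin (0 : ℝ) (Set.Ioi 0), s ∈ Set.Ioo (0 : ℝ) t2 :=
      Ioo_mem_nhdsGT_of_mem ⟨le_refl 0, ht2.1⟩
    obtain ⟨s, hs1, hs2⟩ := (hev1.and hev2).exists
    have : h t2 < h s := hanti ⟨hs2.1, hs2.2.trans ht2.2⟩ ht2 hs2.2
    linarith
  -- facts about the integrand f
  have hfpos : ∀ s ∈ Set.Ioc (0 : ℝ) 1, 0 < ff n ε h s := by
    intro s hs
    apply one_div_pos.mpr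
    exact mul_pos (mul_pos (pow_pos (hposIoc s hs) 2) (rpow_pos_of_pos hs.1 _)) (by positivity)
  have hfcontAt : ∀ r ∈ Set.Ioo (0 : ℝ) 1, ContinuousAt (ff n ε h) r := by
    intro r hr
    have hhAt : ContinuousAt h r := (hd1 r hr).continuousAt
    have hrp : ContinuousAt (fun x : ℝ => x ^ ((n : ℝ) - 2)) r :=
      (Real.hasDerivAt_rpow_const (p := (n : ℝ) - 2) (Or.inl hr.1.ne')).continuousAt
    apply ContinuousAt.div continuousAt_const
    · exact ((hhAt.pow 2).mul hrp).mul (by fun_prop)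
    · exact ne_of_gt (mul_pos (mul_pos (pow_pos (hpos r hr) 2) (rpow_pos_of_pos hr.1 _))
        (by positivity))
  have hfcontIoo : ContinuousOn (ff n ε h) (Set.Ioo 0 1) := fun x hx =>
    (hfcontAt x hx).continuousWithinAt
  have hfcontIcc : ∀ r ∈ Set.Ioc (0 : ℝ) 1, ContinuousOn (ff n ε h) (Set.Icc r 1) := by
    intro r hr
    have hhc : ContinuousOn h (Set.Icc r 1) := hcont.mono (Set.Icc_subset_Icc hr.1.le le_rfl)
    have hrp : ContinuousOn (fun x : ℝ => x ^ ((n : ℝ) - 2)) (Set.Icc r 1) := by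
      apply ContinuousOn.rpow_const continuousOn_id
      intro x hx
      exact Or.inl (ne_of_gt (lt_of_lt_of_le hr.1 hx.1))
    apply ContinuousOn.div continuousOn_const
    · exact ((hhc.pow 2).mul hrp).mul (by fun_prop)
    · intro x hx
      have hx0 : (0 : ℝ) < x := lt_of_lt_of_le hr.1 hx.1
      exact ne_of_gt (mul_pos (mul_pos (pow_pos (hposIoc x ⟨hx0, hx.2⟩) 2)
        (rpow_pos_of_pos hx0 _)) (by positivity))
  have hfint : ∀ r ∈ Set.Ioc (0 : ℝ) 1, IntervalIntegrable (ff n ε h) volume r 1 := by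
    intro r hr
    apply ContinuousOn.intervalIntegrable
    rw [Set.uIcc_of_le hr.2]
    exact hfcontIcc r hr
  have hId : ∀ r ∈ Set.Ioo (0 : ℝ) 1, HasDerivAt (If n ε h) (-(ff n ε h r)) r := by
    intro r hr
    exact intervalIntegral.integral_hasDerivAt_left (hfint r ⟨hr.1, hr.2.le⟩)
      (hfcontIoo.stronglyMeasurableAtFilter isOpen_Ioo r hr) (hfcontAt r hr)
  have hIpos : ∀ r ∈ Set.Ioo (0 : ℝ) 1, 0 < If n ε h r := by
    intro r hr
    exact intervalIntegral_pos_of_pos_on (hfint r ⟨hr.1, hr.2.le⟩)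
      (fun x hx => hfpos x ⟨hr.1.trans hx.1, hx.2.le⟩) hr.2
  have hInn : ∀ r ∈ Set.Ioc (0 : ℝ) 1, 0 ≤ If n ε h r := by
    intro r hr
    exact intervalIntegral.integral_nonneg hr.2
      (fun u hu => (hfpos u ⟨lt_of_lt_of_le hr.1 hu.1, hu.2⟩).le)
  -- derivative of F = h * I
  have hFd : ∀ r ∈ Set.Ioo (0 : ℝ) 1, HasDerivAt (fun x => h x * If n ε h x)
      (deriv h r * If n ε h r - 1 / (h r * Gf n ε r)) r := by
    intro r hr
    have : HasDerivAt (fun x => h x * If n ε h x) _ r := (hd1 r hr).mul (hId r hr)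
    convert this using 1
    have hh0 : h r ≠ 0 := (hpos r hr).ne'
    have hr0 : r ≠ 0 := hr.1.ne'
    have hrp : (0:ℝ) < r ^ ((n : ℝ) - 2) := rpow_pos_of_pos hr.1 _
    have hεr : (0:ℝ) < ε + r ^ 2 := by positivity
    simp only [ff, Gf]
    field_simp
    ring
  have hFpos : ∀ r ∈ Set.Ioo (0 : ℝ) 1, 0 < h r * If n ε h r := fun r hr =>
    mul_pos (hpos r hr) (hIpos r hr)
  -- derivative of J = G h' I - 1/h
  have hJd : ∀ r ∈ Set.Ioo (0 : ℝ) 1, HasDerivAt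
      (fun x => Gf n ε x * deriv h x * If n ε h x - (h x)⁻¹)
      (((n : ℝ) - 2) * Gf n ε r * (h r * If n ε h r) / r ^ 2) r := by
    intro r hr
    have d1 := (hKd r hr).mul (hId r hr)
    have d2 := (hd1 r hr).inv (hpos r hr).ne'
    have : HasDerivAt (fun x => Gf n ε x * deriv h x * If n ε h x - (h x)⁻¹) _ r := d1.sub d2
    convert this using 1
    have hh0 : h r ≠ 0 := (hpos r hr).ne'
    have hr0 : r ≠ 0 := hr.1.ne'
    have hrp : (0:ℝ) < r ^ ((n : ℝ) - 2) := rpow_pos_of_pos hr.1 _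
    have hεr : (0:ℝ) < ε + r ^ 2 := by positivity
    simp only [ff, Gf]
    field_simp
    ring
  have hJmono : StrictMonoOn (fun x => Gf n ε x * deriv h x * If n ε h x - (h x)⁻¹)
      (Set.Ioo 0 1) := by
    apply strictMonoOn_of_deriv_pos (convex_Ioo 0 1)
    · exact fun x hx => (hJd x hx).continuousAt.continuousWithinAt
    · intro x hx
      rw [interior_Ioo] at hx
      rw [(hJd x hx).deriv]
      exact div_pos (mul_pos (mul_pos hcpos (hGpos x hx.1)) (hFpos x hx)) (pow_pos hx.1 2)
  -- F tends to 0 at 1⁻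
  have hFsmall : Tendsto (fun s => h s * If n ε h s) (nhdsWithin 1 (Set.Iio (1:ℝ))) (nhds 0) := by
    obtain ⟨x0, hx0, hB⟩ := isCompact_Icc.exists_isMaxOn (α := ℝ)
      (Set.nonempty_Icc.mpr (by norm_num : (1/2 : ℝ) ≤ 1))
      (hfcontIcc (1/2) ⟨by norm_num, by norm_num⟩)
    set Bb := ff n ε h x0 with hBbdef
    have hIb : ∀ s ∈ Set.Ico (1/2 : ℝ) 1, If n ε h s ≤ Bb * (1 - s) := by
      intro s hs
      have h12 : s ∈ Set.Ioc (0:ℝ) 1 := ⟨by linarith [hs.1], hs.2.le⟩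
      have := intervalIntegral.integral_mono_on hs.2.le (hfint s h12)
        (_root_.intervalIntegrable_const (c := Bb)) (fun x hx => hB ⟨le_trans hs.1 hx.1, hx.2⟩)
      simpa [If, mul_comm] using this
    apply squeeze_zero' (g := fun s => Bb * (1 - s))
    · filter_upwards [Ioo_mem_nhdsLT_of_mem (show (1:ℝ) ∈ Set.Ioc (1/2 : ℝ) 1 by norm_num)]
        with s hs
      exact (mul_nonneg (hpos s ⟨by linarith [hs.1], hs.2⟩).le (hInn s ⟨by linarith [hs.1], hs.2.le⟩))
    · filter_upwards [Ioo_mem_nhdsLT_of_mem (show (1:ℝ) ∈ Set.Ioc (1/2 : ℝ) 1 by norm_num)]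
        with s hs
      calc h s * If n ε h s ≤ 1 * If n ε h s := by
            apply mul_le_mul_of_nonneg_right (hle1 s ⟨by linarith [hs.1], hs.2.le⟩)
              (hInn s ⟨by linarith [hs.1], hs.2.le⟩)
        _ = If n ε h s := one_mul _
        _ ≤ Bb * (1 - s) := hIb s ⟨hs.1.le, hs.2⟩
    · have : Tendsto (fun s : ℝ => Bb * (1 - s)) (nhds 1) (nhds (Bb * (1 - 1))) := by
        exact (tendsto_const_nhds.mul ((tendsto_const_nhds.sub tendsto_id)))
      simpa using this.mono_left nhdsWithin_le_nhds
  -- J < 0 on (0,1)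
  have hJneg : ∀ t ∈ Set.Ioo (0 : ℝ) 1, Gf n ε t * deriv h t * If n ε h t - (h t)⁻¹ < 0 := by
    by_contra hcon
    push_neg at hcon
    obtain ⟨t0, ht0, ht0ge⟩ := hcon
    have hFmono : StrictMonoOn (fun x => h x * If n ε h x) (Set.Ioo t0 1) := by
      apply strictMonoOn_of_deriv_pos (convex_Ioo t0 1)
      · intro x hx
        exact (hFd x ⟨ht0.1.trans hx.1, hx.2⟩).continuousAt.continuousWithinAt
      · intro x hx
        rw [interior_Ioo] at hx
        have hx1 : x ∈ Set.Ioo (0:ℝ) 1 := ⟨ht0.1.trans hx.1, hx.2⟩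
        rw [(hFd x hx1).deriv]
        have hJx : 0 < Gf n ε x * deriv h x * If n ε h x - (h x)⁻¹ :=
          lt_of_le_of_lt ht0ge (hJmono ht0 hx1 hx.1)
        have hGx := hGpos x hx1.1
        have hhx := hpos x hx1
        have : deriv h x * If n ε h x - 1 / (h x * Gf n ε x)
            = (Gf n ε x * deriv h x * If n ε h x - (h x)⁻¹) / Gf n ε x := by
          field_simp
        rw [this]
        exact div_pos hJx hGx
    set r0 := (t0 + 1) / 2 with hr0def
    have hr0 : r0 ∈ Set.Ioo t0 1 := ⟨by linarith [ht0.2], by linarith [ht0.2]⟩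
    have hr0' : r0 ∈ Set.Ioo (0:ℝ) 1 := ⟨ht0.1.trans hr0.1, hr0.2⟩
    have hFr0 : 0 < h r0 * If n ε h r0 := hFpos r0 hr0'
    have hev1 : ∀ᶠ s in nhdsWithin 1 (Set.Iio (1:ℝ)), h s * If n ε h s < h r0 * If n ε h r0 :=
      hFsmall (Iio_mem_nhds hFr0)
    have hev2 : ∀ᶠ s in nhdsWithin 1 (Set.Iio (1:ℝ)), s ∈ Set.Ioo r0 1 :=
      Ioo_mem_nhdsLT_of_mem ⟨hr0.2, le_refl 1⟩
    obtain ⟨s, hs1, hs2⟩ := (hev1.and hev2).exists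
    have : h r0 * If n ε h r0 < h s * If n ε h s :=
      hFmono hr0 ⟨hr0.1.trans hs2.1, hs2.2⟩ hs2.1
    linarith
  -- F strictly antitone on (0,1)
  have hFanti : StrictAntiOn (fun x => h x * If n ε h x) (Set.Ioo 0 1) := by
    apply strictAntiOn_of_deriv_neg (convex_Ioo 0 1)
    · exact fun x hx => (hFd x hx).continuousAt.continuousWithinAt
    · intro x hx
      rw [interior_Ioo] at hx
      rw [(hFd x hx).deriv]
      have hGx := hGpos x hx.1
      have hhx := hpos x hx
      have : deriv h x * If n ε h x - 1 / (h x * Gf n ε x)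
          = (Gf n ε x * deriv h x * If n ε h x - (h x)⁻¹) / Gf n ε x := by
        field_simp
      rw [this]
      exact div_neg_of_neg_of_pos (hJneg x hx) hGx
  -- unboundedness
  have hnb : ∀ M : ℝ, ∃ δ ∈ Set.Ioo (0:ℝ) 1, M < h δ * If n ε h δ := by
    intro M
    by_contra hcon
    push_neg at hcon
    have hδ : (1/2 : ℝ) ∈ Set.Ioo (0:ℝ) 1 := by norm_num
    have hM0 : 0 < M := lt_of_lt_of_le (hFpos _ hδ) (hcon _ hδ)
    set x := (ε + 1) * (3 * M + 1) with hxdef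
    have hx : 0 < x := by positivity
    set r := (1/2 : ℝ) * Real.exp (-x) with hrdef
    have hrpos : 0 < r := by positivity
    have hrlt : r < 1/2 := by
      have h1' : Real.exp (-x) < 1 := Real.exp_lt_one_iff.mpr (by linarith)
      nlinarith
    have hr1 : r ∈ Set.Ioo (0:ℝ) 1 := ⟨hrpos, by linarith⟩
    have hsub : Set.Icc r (1/2 : ℝ) ⊆ Set.Ioo (0:ℝ) 1 := by
      intro y hy
      exact ⟨lt_of_lt_of_le hrpos hy.1, lt_of_le_of_lt hy.2 (by norm_num)⟩
    -- derivative of A = h^2 * I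
    have hAd : ∀ s ∈ Set.Ioo (0:ℝ) 1, HasDerivAt (fun y => h y ^ 2 * If n ε h y)
        (2 * deriv h s * (h s * If n ε h s) - 1 / Gf n ε s) s := by
      intro s hs
      have : HasDerivAt (fun y => h y ^ 2 * If n ε h y) _ s := ((hd1 s hs).pow 2).mul (hId s hs)
      convert this using 1
      have hh0 : h s ≠ 0 := (hpos s hs).ne'
      have hrp : (0:ℝ) < s ^ ((n : ℝ) - 2) := rpow_pos_of_pos hs.1 _
      have hεr : (0:ℝ) < ε + s ^ 2 := by positivity
      simp only [ff, Gf, Pi.pow_apply]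
      field_simp
      ring
    have contA : ContinuousOn (fun s => 2 * deriv h s * (h s * If n ε h s) - 1 / Gf n ε s)
        (Set.Icc r (1/2 : ℝ)) := by
      intro y hy
      have hy1 := hsub hy
      exact (((continuousAt_const.mul (hd2 y hy1).continuousAt).mul
        (hFd y hy1).continuousAt).sub
        (continuousAt_const.div (hGd y hy1).continuousAt (hGpos y hy1.1).ne')).continuousWithinAt
    have intA : IntervalIntegrable (fun s => 2 * deriv h s * (h s * If n ε h s) - 1 / Gf n ε s)
        volume r (1/2 : ℝ) := by
      apply ContinuousOn.intervalIntegrable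
      rwa [Set.uIcc_of_le hrlt.le]
    have key : ∫ s in r..(1/2 : ℝ), (2 * deriv h s * (h s * If n ε h s) - 1 / Gf n ε s)
        = h (1/2) ^ 2 * If n ε h (1/2) - h r ^ 2 * If n ε h r := by
      exact intervalIntegral.integral_eq_sub_of_hasDerivAt
        (f := fun y => h y ^ 2 * If n ε h y)
        (fun s hs => hAd s (hsub (by rwa [Set.uIcc_of_le hrlt.le] at hs))) intA
    have int1 : IntervalIntegrable (fun s => 2 * M * deriv h s) volume r (1/2 : ℝ) := by
      apply ContinuousOn.intervalIntegrable
      rw [Set.uIcc_of_le hrlt.le]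
      exact continuousOn_const.mul (hd1cont.mono hsub)
    have int2 : IntervalIntegrable (fun s : ℝ => (ε+1)⁻¹ * s⁻¹) volume r (1/2 : ℝ) := by
      apply ContinuousOn.intervalIntegrable
      rw [Set.uIcc_of_le hrlt.le]
      exact continuousOn_const.mul (continuousOn_id.inv₀ (fun y hy => (hsub hy).1.ne'))
    have key2 : ∫ s in r..(1/2 : ℝ), (2 * deriv h s * (h s * If n ε h s) - 1 / Gf n ε s)
        ≤ ∫ s in r..(1/2 : ℝ), (2 * M * deriv h s - (ε+1)⁻¹ * s⁻¹) := by
      apply intervalIntegral.integral_mono_on hrlt.le intA (int1.sub int2)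
      intro s hs
      have hs1 := hsub hs
      have hF1 : 2 * deriv h s * (h s * If n ε h s) ≤ 2 * M * deriv h s := by
        have h2 := hcon s hs1
        nlinarith [hderivpos s hs1, hFpos s hs1]
      have hF2 : (ε+1)⁻¹ * s⁻¹ ≤ 1 / Gf n ε s := by
        have hGle : Gf n ε s ≤ (ε + 1) * s := by
          have hsle : s ^ ((n:ℝ) - 2) ≤ s := by
            calc s ^ ((n:ℝ) - 2) ≤ s ^ (1:ℝ) :=
                  rpow_le_rpow_of_exponent_ge hs1.1 hs1.2.le hc
              _ = s := rpow_one s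
          have hεs : ε + s ^ 2 ≤ ε + 1 := by nlinarith [hs1.1, hs1.2]
          calc Gf n ε s = s ^ ((n:ℝ) - 2) * (ε + s ^ 2) := rfl
            _ ≤ s * (ε + 1) := by
                apply mul_le_mul hsle hεs (by positivity) hs1.1.le
            _ = (ε + 1) * s := mul_comm _ _
        calc (ε+1)⁻¹ * s⁻¹ = 1 / ((ε + 1) * s) := by rw [one_div, mul_inv]
          _ ≤ 1 / Gf n ε s := one_div_le_one_div_of_le (hGpos s hs1.1) hGle
      linarith
    have hIδr : ∫ s in r..(1/2 : ℝ), deriv h s = h (1/2) - h r := by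
      apply intervalIntegral.integral_eq_sub_of_hasDerivAt
      · intro s hs
        rw [Set.uIcc_of_le hrlt.le] at hs
        exact hd1 s (hsub hs)
      · apply ContinuousOn.intervalIntegrable
        rw [Set.uIcc_of_le hrlt.le]
        exact hd1cont.mono hsub
    have hlog : Real.log ((1/2 : ℝ) / r) = x := by
      rw [hrdef]
      rw [show (1/2 : ℝ) / ((1/2 : ℝ) * Real.exp (-x)) = Real.exp x by
        rw [Real.exp_neg]
        field_simp]
      exact Real.log_exp x
    have key3 : ∫ s in r..(1/2 : ℝ), (2 * M * deriv h s - (ε+1)⁻¹ * s⁻¹)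
        = 2 * M * (h (1/2) - h r) - (ε+1)⁻¹ * x := by
      rw [intervalIntegral.integral_sub int1 int2, intervalIntegral.integral_const_mul,
        intervalIntegral.integral_const_mul, hIδr, integral_inv_of_pos hrpos (by norm_num), hlog]
    have hAδ : 0 ≤ h (1/2) ^ 2 * If n ε h (1/2) :=
      mul_nonneg (sq_nonneg _) (hInn _ ⟨by norm_num, by norm_num⟩)
    have hAr : h r ^ 2 * If n ε h r ≤ M := by
      have e1 : h r ^ 2 * If n ε h r = h r * (h r * If n ε h r) := by ring
      rw [e1]
      calc h r * (h r * If n ε h r) ≤ 1 * (h r * If n ε h r) :=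
            mul_le_mul_of_nonneg_right (hle1 r ⟨hr1.1, hr1.2.le⟩) (hFpos r hr1).le
        _ = h r * If n ε h r := one_mul _
        _ ≤ M := hcon r hr1
    have hhd : h (1/2) - h r ≤ 1 := by
      have := hle1 (1/2 : ℝ) ⟨by norm_num, by norm_num⟩
      have := (hpos r hr1).le
      linarith
    have hxval : (ε+1)⁻¹ * x = 3 * M + 1 := by
      rw [hxdef]
      field_simp
    rw [key3, hxval] at key2
    rw [key] at key2
    nlinarith
  -- conclude
  have final : Tendsto (fun r => h r * If n ε h r) (nhdsWithin 0 (Set.Ioi (0:ℝ))) atTop := by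
    rw [Filter.tendsto_atTop]
    intro b
    obtain ⟨δ, hδ, hFδ⟩ := hnb b
    filter_upwards [Ioo_mem_nhdsGT_of_mem (show (0:ℝ) ∈ Set.Ico (0:ℝ) δ from ⟨le_refl 0, hδ.1⟩)]
      with r hr
    exact le_of_lt (hFδ.trans (hFanti ⟨hr.1, hr.2.trans hδ.2⟩ hδ hr.2))
  exact final
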